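/- Let n ≥ 1 and let e : Fin n → ℂ satisfy ∑ᵢ eᵢ = 0 and ∑ᵢ |eᵢ| = 2. Then there exists a unique z : Fin n → ℂ such that for every i, zᵢ² = eᵢ and either Re zᵢ > 0, or Re zᵢ = 0 and Im zᵢ ≥ 0. Moreover this z satisfies ∑ᵢ (Re zᵢ)(Im zᵢ) = 0, ∑ᵢ (Re zᵢ)² = 1, and ∑ᵢ (Im zᵢ)² = 1; in particular the squaring map H is surjective from the Stiefel manifold V₂(ℝⁿ) onto Pol₂(n), with a distinguished normalized lift. -/

import Mathlib

/-!
Every complex number has exactly two square roots `±w`, and exactly one of them lies in the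
half-open half-plane `Re > 0 ∨ (Re = 0 ∧ Im ≥ 0)` (both do only when `w = 0`); choosing it
coordinatewise gives the unique normalized lift. Writing `zᵢ = xᵢ + i yᵢ`, the real and imaginary
parts of `∑ zᵢ² = 0` say `∑ xᵢ² = ∑ yᵢ²` and `∑ xᵢ yᵢ = 0`, while `∑ |zᵢ²| = ∑ xᵢ² + ∑ yᵢ² = 2`.
-/

open Finset Complex

namespace Complex

/-- A fundamental domain of `z ↦ -z` on `ℂ`. -/
def IsNormalized (z : ℂ) : Prop :=
  0 < z.re ∨ (z.re = 0 ∧ 0 ≤ z.im)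

theorem isNormalized_or_isNormalized_neg (z : ℂ) : IsNormalized z ∨ IsNormalized (-z) := by
  unfold IsNormalized
  rcases lt_trichotomy z.re 0 with h | h | h
  · right; left; simpa using h
  · rcases le_total 0 z.im with h' | h'
    · exact Or.inl (Or.inr ⟨h, h'⟩)
    · exact Or.inr (Or.inr ⟨by simp [h], by simpa using h'⟩)
  · exact Or.inl (Or.inl h)

theorem eq_zero_of_isNormalized_of_isNormalized_neg {z : ℂ} (hz : IsNormalized z)
    (hz' : IsNormalized (-z)) : z = 0 := by
  unfold IsNormalized at hz hz'
  rw [neg_re, neg_im] at hz'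
  apply Complex.ext <;> simp only [zero_re, zero_im] <;> rcases hz with hz | ⟨hz, hz₁⟩ <;>
    rcases hz' with hz' | ⟨hz', hz₁'⟩ <;> linarith

theorem exists_sq_eq_isNormalized (c : ℂ) : ∃ z : ℂ, z ^ 2 = c ∧ IsNormalized z := by
  obtain ⟨w, hw⟩ := IsAlgClosed.exists_pow_nat_eq c two_pos
  rcases isNormalized_or_isNormalized_neg w with h | h
  · exact ⟨w, hw, h⟩
  · exact ⟨-w, by rw [neg_sq, hw], h⟩

theorem eq_of_sq_eq_of_isNormalized {z w : ℂ} (hz : IsNormalized z) (hw : IsNormalized w)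
    (h : w ^ 2 = z ^ 2) : w = z := by
  rcases sq_eq_sq_iff_eq_or_eq_neg.1 h with h | rfl
  · exact h
  · rw [eq_zero_of_isNormalized_of_isNormalized_neg hz hw, neg_zero]

theorem sq_re (z : ℂ) : (z ^ 2).re = z.re ^ 2 - z.im ^ 2 := by
  simp [sq]

theorem sq_im (z : ℂ) : (z ^ 2).im = 2 * (z.re * z.im) := by
  simp [sq]; ring

theorem norm_sq_eq_re_sq_add_im_sq (z : ℂ) : ‖z ^ 2‖ = z.re ^ 2 + z.im ^ 2 := by
  rw [norm_pow, Complex.sq_norm, normSq_apply]; ring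

end Complex

section SumOfSquares

variable {ι : Type*} (s : Finset ι) (z : ι → ℂ)

theorem Complex.re_sum_sq : (∑ i ∈ s, z i ^ 2).re = ∑ i ∈ s, (z i).re ^ 2 - ∑ i ∈ s, (z i).im ^ 2 := by
  simp only [re_sum, sq_re, sum_sub_distrib]

theorem Complex.im_sum_sq : (∑ i ∈ s, z i ^ 2).im = 2 * ∑ i ∈ s, (z i).re * (z i).im := by
  simp only [im_sum, sq_im, mul_sum]

theorem Complex.sum_norm_sq :
    ∑ i ∈ s, ‖z i ^ 2‖ = ∑ i ∈ s, (z i).re ^ 2 + ∑ i ∈ s, (z i).im ^ 2 := by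
  simp only [norm_sq_eq_re_sq_add_im_sq, sum_add_distrib]

theorem stiefel_of_sum_sq_eq_zero {r : ℝ} (hsum : ∑ i ∈ s, z i ^ 2 = 0)
    (hlen : ∑ i ∈ s, ‖z i ^ 2‖ = 2 * r) :
    ∑ i ∈ s, (z i).re * (z i).im = 0 ∧ ∑ i ∈ s, (z i).re ^ 2 = r ∧
      ∑ i ∈ s, (z i).im ^ 2 = r := by
  have hre := Complex.re_sum_sq s z
  have him := Complex.im_sum_sq s z
  rw [hsum, zero_re] at hre
  rw [hsum, zero_im] at him
  rw [Complex.sum_norm_sq] at hlen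
  exact ⟨by linarith, by linarith, by linarith⟩

end SumOfSquares

open Finset in
theorem squaring_surjective_normalized_lift_general (n : ℕ) (e : Fin n → ℂ)
    (hsum : ∑ i, e i = 0) (hlen : ∑ i, ‖e i‖ = 2) :
    ∃ z : Fin n → ℂ,
      (∀ i, (z i) ^ 2 = e i ∧ (0 < (z i).re ∨ ((z i).re = 0 ∧ 0 ≤ (z i).im))) ∧
      (∀ w : Fin n → ℂ,
        (∀ i, (w i) ^ 2 = e i ∧ (0 < (w i).re ∨ ((w i).re = 0 ∧ 0 ≤ (w i).im))) → w = z) ∧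
      ∑ i, (z i).re * (z i).im = 0 ∧
      ∑ i, (z i).re ^ 2 = 1 ∧
      ∑ i, (z i).im ^ 2 = 1 := by
  choose z hz hnorm using fun i => exists_sq_eq_isNormalized (e i)
  have hsum' : ∑ i, z i ^ 2 = 0 := by simpa only [hz] using hsum
  have hlen' : ∑ i, ‖z i ^ 2‖ = 2 * 1 := by simpa only [hz, mul_one] using hlen
  refine ⟨z, fun i => ⟨hz i, hnorm i⟩, fun w hw => ?_, stiefel_of_sum_sq_eq_zero _ z hsum' hlen'⟩
  funext i
  exact eq_of_sq_eq_of_isNormalized (hnorm i) (hw i).2 ((hw i).1.trans (hz i).symm)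

open Finset in
/-- Every closed `n`-gon of total length `2` in the plane has a unique normalized lift
under the coordinatewise squaring map `H`: there is a unique `z` with `zᵢ² = eᵢ` and
`Re zᵢ > 0`, or `Re zᵢ = 0` and `Im zᵢ ≥ 0`, for every `i`; moreover this `z` is a point
of the Stiefel manifold `V₂(ℝⁿ)`. -/
theorem squaring_surjective_normalized_lift (n : ℕ) (hn : 1 ≤ n) (e : Fin n → ℂ)
    (hsum : ∑ i, e i = 0) (hlen : ∑ i, ‖e i‖ = 2) :
    ∃ z : Fin n → ℂ,
      (∀ i, (z i) ^ 2 = e i ∧ (0 < (z i).re ∨ ((z i).re = 0 ∧ 0 ≤ (z i).im))) ∧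
      (∀ w : Fin n → ℂ,
        (∀ i, (w i) ^ 2 = e i ∧ (0 < (w i).re ∨ ((w i).re = 0 ∧ 0 ≤ (w i).im))) → w = z) ∧
      ∑ i, (z i).re * (z i).im = 0 ∧
      ∑ i, (z i).re ^ 2 = 1 ∧
      ∑ i, (z i).im ^ 2 = 1 :=
  squaring_surjective_normalized_lift_general n e hsum hlen
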